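/- Under the standing hypotheses with 1_g ≠ 0 for all g ∈ 𝒢, let ℋ ∈ wSub_gt(𝒢) with the chosen decomposition and transversals, let T = S^{α_ℋ} and T_{y_j} = S_{y_j}^{α_{ℋ_j(y_j)}} for 1 ≤ j ≤ r, and let g ∈ 𝒢. Then g ∈ 𝒢_T if and only if there exists 1 ≤ k ≤ r such that s(g), t(g) ∈ Y_k and τ_k(g) ∈ 𝒢(y_k)_{T_{y_k}}. -/

import Mathlib

/-!
A full arrow `σ : c ⟶ z` identifies `S_c` with `S_z`, so conjugating by the transversal turns
"`g` carries `α_{τ_u}(t')` to `α_{τ_v}(t')`" into "`τ_k(g)` fixes `t'`". Both directions then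
compare an `ℋ`-invariant `t` with an element `t' ∈ T_{y_k}` whose transports are the corners
`t·1_z`, `z ∈ Y_k`: from `t` one takes `t' = t·1_{y_k}`, and from `t'` the `ℋ`-invariant
`∑_{z ∈ Y_k} α_{τ_z}(t')`, supported on `Y_k`. For `t' = 1_{y_k}` the latter is fixed by an
arrow `g` from `Y_k` to outside `Y_k` only if `1_g = 0`, so `g` cannot leave the component.
-/

open CategoryTheory

namespace PaperGalois

/-- A unital partial action of a groupoid (with object/morphism data given by a
`CategoryTheory.Groupoid` structure on `Obj`) on a commutative ring `S`.
For a morphism `g : a ⟶ b` (source `a`, target `b`), `e g` is the central idempotent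
with `S_g = S • e g`, and `act g s` encodes `α_g(s · 1_{g⁻¹})`. -/
structure UPA (Obj : Type*) [Groupoid Obj] (S : Type*) [CommRing S] where
  e : ∀ ⦃a b : Obj⦄, (a ⟶ b) → S
  act : ∀ ⦃a b : Obj⦄, (a ⟶ b) → S → S
  idem : ∀ ⦃a b : Obj⦄ (g : a ⟶ b), e g * e g = e g
  e_le : ∀ ⦃a b : Obj⦄ (g : a ⟶ b), e g * e (𝟙 b) = e g
  act_proj : ∀ ⦃a b : Obj⦄ (g : a ⟶ b) (s : S), act g (s * e (Groupoid.inv g)) = act g s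
  act_mem : ∀ ⦃a b : Obj⦄ (g : a ⟶ b) (s : S), act g s * e g = act g s
  act_add : ∀ ⦃a b : Obj⦄ (g : a ⟶ b) (s t : S), act g (s + t) = act g s + act g t
  act_mul : ∀ ⦃a b : Obj⦄ (g : a ⟶ b) (s t : S), act g (s * t) = act g s * act g t
  act_unit : ∀ ⦃a b : Obj⦄ (g : a ⟶ b), act g (e (Groupoid.inv g)) = e g
  act_id : ∀ (a : Obj) (s : S), act (𝟙 a) s = s * e (𝟙 a)
  act_inv : ∀ ⦃a b : Obj⦄ (g : a ⟶ b) (s : S),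
      act (Groupoid.inv g) (act g s) = s * e (Groupoid.inv g)
  act_comp : ∀ ⦃a b c : Obj⦄ (h : a ⟶ b) (g : b ⟶ c) (s : S),
      act g (act h s) = act (h ≫ g) s * e g

namespace UPA

variable {Obj : Type*} [Groupoid Obj] {S : Type*} [CommRing S] (α : UPA Obj S)

lemma act_zero ⦃a b : Obj⦄ (g : a ⟶ b) : α.act g 0 = 0 := by
  have h := α.act_add g 0 0
  rw [add_zero] at h
  exact (left_eq_add.mp h)

lemma act_neg ⦃a b : Obj⦄ (g : a ⟶ b) (s : S) : α.act g (-s) = -(α.act g s) := by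
  have h := α.act_add g s (-s)
  rw [add_neg_cancel, α.act_zero] at h
  exact (eq_neg_of_add_eq_zero_right h.symm)

lemma act_one ⦃a b : Obj⦄ (g : a ⟶ b) : α.act g 1 = α.e g := by
  have h := α.act_proj g 1
  rw [one_mul, α.act_unit] at h
  exact h.symm

lemma act_e_src ⦃a b : Obj⦄ (g : a ⟶ b) : α.act g (α.e (𝟙 a)) = α.e g := by
  have h1 : α.e (𝟙 a) * α.e (Groupoid.inv g) = α.e (Groupoid.inv g) := by
    rw [mul_comm]; exact α.e_le (Groupoid.inv g)
  have h2 := α.act_proj g (α.e (𝟙 a))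
  rw [h1, α.act_unit] at h2
  exact h2.symm

/-- The set of `α`-invariant elements of `S` relative to a subgroupoid `H`:
`S^{α_H} = {s ∈ S : α_h(s·1_{h⁻¹}) = s·1_h for all h ∈ H}`. -/
def invSet (H : Subgroupoid Obj) : Set S :=
  {s : S | ∀ ⦃a b : Obj⦄ (h : a ⟶ b), h ∈ H.arrows a b → α.act h s = s * α.e h}

/-- The invariants `S_y^{α_A}` of the corner ring `S_y = S·1_y` under a set `A`
of loops at `y`. -/
def grpInvSet (y : Obj) (A : Set (y ⟶ y)) : Set S :=
  {s : S | s * α.e (𝟙 y) = s ∧ ∀ g ∈ A, α.act g s = s * α.e g}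

/-- The arrows `a ⟶ b` of the groupoid acting trivially on the subset `T ⊆ S`;
for `T` a subring this gives `𝒢_T`. -/
def fixingSet (T : Set S) (a b : Obj) : Set (a ⟶ b) :=
  {g : a ⟶ b | ∀ t ∈ T, α.act g t = t * α.e g}

/-- `⊕_{y ∈ Z} S_y`, the part of `S` supported on a set `Z` of objects. -/
def partSet (Z : Set Obj) : Set S :=
  {s : S | ∀ y : Obj, y ∉ Z → s * α.e (𝟙 y) = 0}

/-- `T·1_y ⊆ S_y` for a subset `T ⊆ S`. -/
def cornerSet (T : Set S) (y : Obj) : Set S :=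
  (fun t => t * α.e (𝟙 y)) '' T

/-- `T' ⊆ S_y` is `α_{𝒢(y,z)}`-strong. -/
def strongAt (T' : Set S) (a b : Obj) : Prop :=
  ∀ g h : a ⟶ b, (h ≫ Groupoid.inv g) ∉ α.fixingSet T' a a →
    ∀ f : S, f * f = f → f ≠ 0 → (f * α.e g = f ∨ f * α.e h = f) →
      ∃ t ∈ T', α.act g t * f ≠ α.act h t * f

/-- `T ⊆ S` is `α`-strong. -/
def IsStrong (T : Set S) : Prop :=
  ∀ a b : Obj, α.strongAt (α.cornerSet T a) a b

/-- Existence of a partial Galois coordinate system for the restriction of `α` to the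
subgroupoid `H` acting on `S_H ⊆ S` (for `H = ⊤`, `Sub = univ` this says that
`S^{α_𝒢} ⊆ S` is an `α_𝒢`-partial Galois extension). -/
def IsGaloisCoordSystem (H : Subgroupoid Obj) (Sub : Set S) : Prop :=
  ∃ (m : ℕ) (av bv : Fin m → S),
    (∀ i, av i ∈ Sub) ∧ (∀ i, bv i ∈ Sub) ∧
    (∀ ⦃a b : Obj⦄ (g : a ⟶ b), g ∈ H.arrows a b → a ≠ b →
        ∑ i, av i * α.act g (bv i) = 0) ∧
    (∀ (a : Obj) (g : a ⟶ a), g ∈ H.arrows a a → g ≠ 𝟙 a →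
        ∑ i, av i * α.act g (bv i) = 0) ∧
    (∀ a : Obj, a ∈ H.objs → ∑ i, av i * α.act (𝟙 a) (bv i) = α.e (𝟙 a))

/-- Group-type condition for the restriction of `α` to `H`, at the base object `u`:
there is a transversal (inside `H`) from `u` to every object of the `H`-component of `u`
whose ideals are as large as possible. -/
def IsGroupTypeAt (H : Subgroupoid Obj) (u : Obj) : Prop :=
  ∃ σ : ∀ v : Obj, (H.arrows u v).Nonempty → (u ⟶ v),
    (∀ v hv, σ v hv ∈ H.arrows u v) ∧
    (∀ h, σ u h = 𝟙 u) ∧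
    (∀ v hv, α.e (Groupoid.inv (σ v hv)) = α.e (𝟙 u) ∧ α.e (σ v hv) = α.e (𝟙 v))

/-- The restriction `α_H` of `α` to the subgroupoid `H` is of group-type. -/
def IsGroupType (H : Subgroupoid Obj) : Prop :=
  ∀ u ∈ H.objs, α.IsGroupTypeAt H u

end UPA

structure SubCorner (S : Type*) [CommRing S] where
  carrier : Set S
  unit : S
  unit_mem : unit ∈ carrier
  mul_unit : ∀ s ∈ carrier, s * unit = s
  add_mem : ∀ ⦃s t : S⦄, s ∈ carrier → t ∈ carrier → s + t ∈ carrier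
  mul_mem : ∀ ⦃s t : S⦄, s ∈ carrier → t ∈ carrier → s * t ∈ carrier
  neg_mem : ∀ ⦃s : S⦄, s ∈ carrier → -s ∈ carrier
  zero_mem : (0 : S) ∈ carrier

namespace SubCorner

variable {S : Type*} [CommRing S]

lemma nsmul_mem (P : SubCorner S) (n : ℕ) {s : S} (hs : s ∈ P.carrier) :
    n • s ∈ P.carrier := by
  induction n with
  | zero => simpa using P.zero_mem
  | succ n ih => rw [succ_nsmul]; exact P.add_mem ih hs

lemma zsmul_mem (P : SubCorner S) (n : ℤ) {s : S} (hs : s ∈ P.carrier) :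
    n • s ∈ P.carrier := by
  cases n with
  | ofNat n => simpa [natCast_zsmul] using P.nsmul_mem n hs
  | negSucc n => rw [negSucc_zsmul]; exact P.neg_mem (P.nsmul_mem (n+1) hs)

instance (P : SubCorner S) : CommRing ↥P.carrier where
  add a b := ⟨a.1 + b.1, P.add_mem a.2 b.2⟩
  mul a b := ⟨a.1 * b.1, P.mul_mem a.2 b.2⟩
  neg a := ⟨-a.1, P.neg_mem a.2⟩
  zero := ⟨0, P.zero_mem⟩
  one := ⟨P.unit, P.unit_mem⟩
  add_assoc a b c := Subtype.ext (add_assoc _ _ _)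
  zero_add a := Subtype.ext (zero_add _)
  add_zero a := Subtype.ext (add_zero _)
  add_comm a b := Subtype.ext (add_comm _ _)
  mul_assoc a b c := Subtype.ext (mul_assoc _ _ _)
  one_mul a := Subtype.ext (by
    show P.unit * a.1 = a.1
    rw [mul_comm]; exact P.mul_unit a.1 a.2)
  mul_one a := Subtype.ext (P.mul_unit a.1 a.2)
  left_distrib a b c := Subtype.ext (left_distrib _ _ _)
  right_distrib a b c := Subtype.ext (right_distrib _ _ _)
  mul_comm a b := Subtype.ext (mul_comm _ _)
  zero_mul a := Subtype.ext (zero_mul _)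
  mul_zero a := Subtype.ext (mul_zero _)
  neg_add_cancel a := Subtype.ext (neg_add_cancel _)
  nsmul n a := ⟨n • a.1, P.nsmul_mem n a.2⟩
  nsmul_zero a := Subtype.ext (zero_nsmul _)
  nsmul_succ n a := Subtype.ext (succ_nsmul _ _)
  zsmul n a := ⟨n • a.1, P.zsmul_mem n a.2⟩
  zsmul_zero' a := Subtype.ext (zero_zsmul _)
  zsmul_succ' n a := Subtype.ext (by
    show ((n.succ : ℤ)) • a.1 = (n : ℤ) • a.1 + a.1
    rw [Int.natCast_succ, add_zsmul, one_zsmul])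
  zsmul_neg' n a := Subtype.ext (by
    show (Int.negSucc n) • a.1 = -(((n.succ : ℤ)) • a.1)
    rw [negSucc_zsmul]
    norm_cast)

def incl {P Q : SubCorner S} (hle : P.carrier ⊆ Q.carrier) (hu : P.unit = Q.unit) :
    ↥P.carrier →+* ↥Q.carrier where
  toFun a := ⟨a.1, hle a.2⟩
  map_one' := Subtype.ext hu
  map_mul' _ _ := rfl
  map_zero' := rfl
  map_add' _ _ := rfl

def IsSepExt (P Q : SubCorner S) (hle : P.carrier ⊆ Q.carrier) (hu : P.unit = Q.unit) : Prop :=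
  letI : Algebra ↥P.carrier ↥Q.carrier := (incl hle hu).toAlgebra
  ∃ ε : TensorProduct ↥P.carrier ↥Q.carrier ↥Q.carrier,
    (∀ t : ↥Q.carrier,
        (TensorProduct.tmul ↥P.carrier t (1 : ↥Q.carrier)) * ε
          = ε * (TensorProduct.tmul ↥P.carrier (1 : ↥Q.carrier) t)) ∧
    LinearMap.mul' ↥P.carrier ↥Q.carrier ε = 1

end SubCorner

/-- A `Subring` of `S`, seen as a corner subring with identity `1`. -/
def Subring.toSC {S : Type*} [CommRing S] (T : Subring S) : SubCorner S where
  carrier := (T : Set S)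
  unit := 1
  unit_mem := T.one_mem
  mul_unit := fun s _ => mul_one s
  add_mem := fun _ _ hs ht => T.add_mem hs ht
  mul_mem := fun _ _ hs ht => T.mul_mem hs ht
  neg_mem := fun _ hs => T.neg_mem hs
  zero_mem := T.zero_mem

namespace UPA

variable {Obj : Type*} [Groupoid Obj] {S : Type*} [CommRing S] (α : UPA Obj S)

lemma invSet_one_mem (H : Subgroupoid Obj) : (1 : S) ∈ α.invSet H :=
  fun _ _ h _ => by rw [α.act_one h, one_mul]

lemma invSet_zero_mem (H : Subgroupoid Obj) : (0 : S) ∈ α.invSet H :=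
  fun _ _ h _ => by rw [α.act_zero h, zero_mul]

lemma invSet_add_mem (H : Subgroupoid Obj) {s t : S} (hs : s ∈ α.invSet H)
    (ht : t ∈ α.invSet H) : s + t ∈ α.invSet H :=
  fun _ _ h hH => by rw [α.act_add h, hs h hH, ht h hH, add_mul]

lemma invSet_mul_mem (H : Subgroupoid Obj) {s t : S} (hs : s ∈ α.invSet H)
    (ht : t ∈ α.invSet H) : s * t ∈ α.invSet H :=
  fun _ _ h hH => by
    rw [α.act_mul h, hs h hH, ht h hH, mul_mul_mul_comm, α.idem h]

lemma invSet_neg_mem (H : Subgroupoid Obj) {s : S} (hs : s ∈ α.invSet H) :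
    -s ∈ α.invSet H :=
  fun _ _ h hH => by rw [α.act_neg h, hs h hH, neg_mul]

/-- The subring of invariants `S^{α_H}` of `S`, a genuine unital subring of `S`. -/
def invariantsSubring (H : Subgroupoid Obj) : Subring S where
  carrier := α.invSet H
  one_mem' := α.invSet_one_mem H
  zero_mem' := α.invSet_zero_mem H
  add_mem' := α.invSet_add_mem H
  mul_mem' := α.invSet_mul_mem H
  neg_mem' := α.invSet_neg_mem H

/-- `S^{α_H}` as a corner subring of `S` (with identity `1`). -/
def invariantsSC (H : Subgroupoid Obj) : SubCorner S where
  carrier := α.invSet H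
  unit := 1
  unit_mem := α.invSet_one_mem H
  mul_unit := fun s _ => mul_one s
  add_mem := fun _ _ hs ht => α.invSet_add_mem H hs ht
  mul_mem := fun _ _ hs ht => α.invSet_mul_mem H hs ht
  neg_mem := fun _ hs => α.invSet_neg_mem H hs
  zero_mem := α.invSet_zero_mem H

lemma grpInvSet_unit_mem (y : Obj) (A : Set (y ⟶ y)) :
    α.e (𝟙 y) ∈ α.grpInvSet y A := by
  refine ⟨α.idem (𝟙 y), fun g _ => ?_⟩
  rw [α.act_e_src g]
  have : α.e (𝟙 y) * α.e g = α.e g := by rw [mul_comm]; exact α.e_le g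
  rw [this]

/-- `S_y^{α_A}` as a corner subring of `S` (with identity `1_y`). -/
def grpInvSC (y : Obj) (A : Set (y ⟶ y)) : SubCorner S where
  carrier := α.grpInvSet y A
  unit := α.e (𝟙 y)
  unit_mem := α.grpInvSet_unit_mem y A
  mul_unit := fun _ hs => hs.1
  add_mem := fun s t hs ht =>
    ⟨by rw [add_mul, hs.1, ht.1], fun g hg => by
      rw [α.act_add g, hs.2 g hg, ht.2 g hg, add_mul]⟩
  mul_mem := fun s t hs ht =>
    ⟨by rw [mul_assoc, ht.1], fun g hg => by
      rw [α.act_mul g, hs.2 g hg, ht.2 g hg, mul_mul_mul_comm, α.idem g]⟩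
  neg_mem := fun s hs =>
    ⟨by rw [neg_mul, hs.1], fun g hg => by rw [α.act_neg g, hs.2 g hg, neg_mul]⟩
  zero_mem := ⟨zero_mul _, fun g _ => by rw [α.act_zero g, zero_mul]⟩

lemma invSet_le (H : Subgroupoid Obj) :
    α.invSet (Subgroupoid.full (Set.univ : Set Obj)) ⊆ α.invSet H :=
  fun _ hs _ _ h _ => hs h ⟨trivial, trivial⟩

lemma invSet_le_subring {T : Subring S}
    (h : ∀ s ∈ α.invSet (Subgroupoid.full (Set.univ : Set Obj)), s ∈ T) :
    (α.invariantsSC (Subgroupoid.full (Set.univ : Set Obj))).carrier ⊆ (Subring.toSC T).carrier :=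
  h

lemma grpInvSet_le (y : Obj) (A : Set (y ⟶ y)) :
    α.grpInvSet y (Set.univ : Set (y ⟶ y)) ⊆ α.grpInvSet y A :=
  fun _ hs => ⟨hs.1, fun g _ => hs.2 g trivial⟩

lemma e_id_mul_e {a b : Obj} (g : a ⟶ b) : α.e (𝟙 b) * α.e g = α.e g := by
  rw [mul_comm, α.e_le]

lemma mul_e_eq_mul_e_id_mul_e {a b : Obj} (g : a ⟶ b) (s : S) :
    s * α.e g = s * α.e (𝟙 b) * α.e g := by
  rw [mul_assoc, α.e_id_mul_e]

lemma act_mul_e_id {a b : Obj} (g : a ⟶ b) (s : S) : α.act g s * α.e (𝟙 b) = α.act g s := by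
  rw [← α.act_mem g s, mul_assoc, α.e_le]

lemma act_mul_e_id_src {a b : Obj} (g : a ⟶ b) (s : S) :
    α.act g (s * α.e (𝟙 a)) = α.act g s := by
  rw [← α.act_proj g (s * _), mul_assoc, α.e_id_mul_e, α.act_proj]

lemma act_e {a b c : Obj} (p : a ⟶ b) (q : b ⟶ c) :
    α.act q (α.e p) = α.e (p ≫ q) * α.e q := by
  rw [← α.act_one p, α.act_comp, α.act_one]

lemma e_comp_mul_e_of_e_eq {a b c : Obj} {p : a ⟶ b} (hp : α.e p = α.e (𝟙 b)) (q : b ⟶ c) :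
    α.e (p ≫ q) * α.e q = α.e q := by
  rw [← α.act_e, hp, α.act_e_src]

lemma act_comp_of_e_eq {a b c : Obj} (q : a ⟶ b) {σ : b ⟶ c} (hσ : α.e σ = α.e (𝟙 c))
    (s : S) : α.act (q ≫ σ) s = α.act σ (α.act q s) := by
  rw [α.act_comp, hσ, α.act_mul_e_id]

/-- `S_{σ⁻¹} = S_a` and `S_σ = S_b`: the group-type condition on a single arrow. -/
def IsFull {a b : Obj} (σ : a ⟶ b) : Prop :=
  α.e (Groupoid.inv σ) = α.e (𝟙 a) ∧ α.e σ = α.e (𝟙 b)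

namespace IsFull

variable {α} {a b c : Obj} {σ : a ⟶ b}

lemma inv (hσ : α.IsFull σ) : α.IsFull (Groupoid.inv σ) :=
  ⟨by rw [Groupoid.inv_eq_inv, Groupoid.inv_eq_inv, IsIso.inv_inv]; exact hσ.2, hσ.1⟩

lemma e_comp (hσ : α.IsFull σ) (q : b ⟶ c) : α.e (σ ≫ q) = α.e q := by
  have hle : α.e q * α.e (σ ≫ q) = α.e (σ ≫ q) := by
    simpa using α.e_comp_mul_e_of_e_eq hσ.inv.2 (σ ≫ q)
  rw [← hle, mul_comm, α.e_comp_mul_e_of_e_eq hσ.2]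

lemma act_comp (hσ : α.IsFull σ) (q : b ⟶ c) (s : S) :
    α.act (σ ≫ q) s = α.act q (α.act σ s) := by
  rw [α.act_comp, ← hσ.e_comp q, α.act_mem]

lemma act_inv_act (hσ : α.IsFull σ) {s : S} (hs : s * α.e (𝟙 a) = s) :
    α.act (Groupoid.inv σ) (α.act σ s) = s := by
  rw [α.act_inv, hσ.1, hs]

lemma act_act_inv (hσ : α.IsFull σ) {s : S} (hs : s * α.e (𝟙 b) = s) :
    α.act σ (α.act (Groupoid.inv σ) s) = s := by
  simpa using hσ.inv.act_inv_act hs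

lemma act_conj_eq_iff {σa : c ⟶ a} {σb : c ⟶ b} (ha : α.IsFull σa) (hb : α.IsFull σb)
    (q : a ⟶ b) {t : S} (ht : t * α.e (𝟙 c) = t) :
    α.act (σa ≫ q ≫ Groupoid.inv σb) t = t * α.e (σa ≫ q ≫ Groupoid.inv σb) ↔
      α.act q (α.act σa t) = α.act σb t * α.e q := by
  have hL : α.act (σa ≫ q ≫ Groupoid.inv σb) t =
      α.act (Groupoid.inv σb) (α.act q (α.act σa t)) := by
    rw [ha.act_comp, α.act_comp_of_e_eq _ hb.inv.2]
  have hR : t * α.e (σa ≫ q ≫ Groupoid.inv σb) =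
      α.act (Groupoid.inv σb) (α.act σb t * α.e q) := by
    rw [ha.e_comp, α.act_mul, hb.act_inv_act ht, α.act_e, hb.inv.2, α.e_le]
  rw [hL, hR]
  refine ⟨fun h => ?_, fun h => by rw [h]⟩
  have h' := congrArg (α.act σb) h
  rwa [hb.act_act_inv (α.act_mul_e_id _ _), hb.act_act_inv (by rw [mul_assoc, α.e_le])] at h'

end IsFull

lemma act_eq_mul_e_iff_conj {c u v : Obj} {σu : c ⟶ u} {σv : c ⟶ v} (hσu : α.IsFull σu)
    (hσv : α.IsFull σv) (g : u ⟶ v) {t t' : S} (ht' : t' * α.e (𝟙 c) = t')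
    (hu : t * α.e (𝟙 u) = α.act σu t') (hv : t * α.e (𝟙 v) = α.act σv t') :
    α.act g t = t * α.e g ↔
      α.act (σu ≫ g ≫ Groupoid.inv σv) t' = t' * α.e (σu ≫ g ≫ Groupoid.inv σv) := by
  rw [hσu.act_conj_eq_iff hσv g ht', ← hu, ← hv, α.act_mul_e_id_src,
    ← α.mul_e_eq_mul_e_id_mul_e]

variable (H : Subgroupoid Obj)

lemma act_mul_e_id_of_mem_invSet {t : S} (ht : t ∈ α.invSet H) {c z : Obj} {σ : c ⟶ z}
    (hσH : σ ∈ H.arrows c z) (hσ : α.e σ = α.e (𝟙 z)) :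
    α.act σ (t * α.e (𝟙 c)) = t * α.e (𝟙 z) := by
  rw [α.act_mul_e_id_src, ht σ hσH, hσ]

lemma mul_e_id_mem_grpInvSet {t : S} (ht : t ∈ α.invSet H) (c : Obj) :
    t * α.e (𝟙 c) ∈ α.grpInvSet c (H.arrows c c) :=
  ⟨by rw [mul_assoc, α.idem], fun l hl => by
    rw [α.act_mul, ht l hl, α.act_e_src, mul_assoc, α.idem, mul_assoc, α.e_id_mul_e]⟩

section Transport

variable [Fintype Obj] {c : Obj} {Z : Set Obj} (σ : ∀ z ∈ Z, c ⟶ z)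

open Classical in
noncomputable def transportSum (t : S) : S :=
  ∑ z, if hz : z ∈ Z then α.act (σ z hz) t else 0

open Classical in
lemma transportSum_mul_e_id (horth : ∀ y z : Obj, y ≠ z → α.e (𝟙 y) * α.e (𝟙 z) = 0)
    (t : S) (a : Obj) :
    α.transportSum σ t * α.e (𝟙 a) = if ha : a ∈ Z then α.act (σ a ha) t else 0 := by
  rw [transportSum, Finset.sum_mul, Finset.sum_eq_single a]
  · split_ifs with ha
    · exact α.act_mul_e_id _ _
    · exact zero_mul _
  · intro z _ hza
    split_ifs with hz
    · rw [← α.act_mul_e_id, mul_assoc, horth z a hza, mul_zero]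
    · exact zero_mul _
  · simp

variable {H} (horth : ∀ y z : Obj, y ≠ z → α.e (𝟙 y) * α.e (𝟙 z) = 0)
  (hZ : ∀ ⦃a b : Obj⦄ (h : a ⟶ b), h ∈ H.arrows a b → (a ∈ Z ↔ b ∈ Z))
  (hσH : ∀ z hz, σ z hz ∈ H.arrows c z) (hσ : ∀ z hz, α.IsFull (σ z hz))
include horth hZ hσH hσ

lemma transportSum_mem_invSet {t : S} (ht : t ∈ α.grpInvSet c (H.arrows c c)) :
    α.transportSum σ t ∈ α.invSet H := by
  intro a b h hh
  by_cases ha : a ∈ Z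
  · have hb := (hZ h hh).1 ha
    rw [α.act_eq_mul_e_iff_conj (hσ a ha) (hσ b hb) h ht.1
      (by rw [α.transportSum_mul_e_id σ horth, dif_pos ha])
      (by rw [α.transportSum_mul_e_id σ horth, dif_pos hb])]
    exact ht.2 _ (H.mul (hσH a ha) (H.mul hh (H.inv (hσH b hb))))
  · have hb : b ∉ Z := mt (hZ h hh).2 ha
    rw [← α.act_mul_e_id_src, α.mul_e_eq_mul_e_id_mul_e h, α.transportSum_mul_e_id σ horth,
      α.transportSum_mul_e_id σ horth, dif_neg ha, dif_neg hb, α.act_zero, zero_mul]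

lemma mem_of_mem_fixingSet {u v : Obj} {g : u ⟶ v} (hg : g ∈ α.fixingSet (α.invSet H) u v)
    (hne : α.e g ≠ 0) (hu : u ∈ Z) : v ∈ Z := by
  by_contra hv
  have h := hg _ (α.transportSum_mem_invSet σ horth hZ hσH hσ (α.grpInvSet_unit_mem c _))
  rw [← α.act_mul_e_id_src, α.mul_e_eq_mul_e_id_mul_e g, α.transportSum_mul_e_id σ horth,
    α.transportSum_mul_e_id σ horth, dif_pos hu, dif_neg hv, zero_mul, α.act_e_src,
    (hσ u hu).2, α.act_e_src] at h
  exact hne h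

lemma mem_fixingSet_iff_conj {u v : Obj} (hu : u ∈ Z) (hv : v ∈ Z) (g : u ⟶ v) :
    g ∈ α.fixingSet (α.invSet H) u v ↔
      σ u hu ≫ g ≫ Groupoid.inv (σ v hv) ∈
        α.fixingSet (α.grpInvSet c (H.arrows c c)) c c := by
  constructor
  · intro hg t' ht'
    rw [← α.act_eq_mul_e_iff_conj (hσ u hu) (hσ v hv) g ht'.1
      (by rw [α.transportSum_mul_e_id σ horth, dif_pos hu])
      (by rw [α.transportSum_mul_e_id σ horth, dif_pos hv])]
    exact hg _ (α.transportSum_mem_invSet σ horth hZ hσH hσ ht')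
  · intro hl t ht
    have ht' := α.mul_e_id_mem_grpInvSet H ht c
    rw [α.act_eq_mul_e_iff_conj (hσ u hu) (hσ v hv) g ht'.1
      (α.act_mul_e_id_of_mem_invSet H ht (hσH u hu) (hσ u hu).2).symm
      (α.act_mul_e_id_of_mem_invSet H ht (hσH v hv) (hσ v hv).2).symm]
    exact hl _ ht'

end Transport

end UPA

lemma _root_.CategoryTheory.Subgroupoid.mem_of_mem_arrows_of_pairwise_empty {Obj ι : Type*}
    [Groupoid Obj] {H : Subgroupoid Obj} {Y : ι → Set Obj} (hcover : ∀ u, ∃ j, u ∈ Y j)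
    (hdisj : ∀ j k, j ≠ k → ∀ u ∈ Y j, ∀ v ∈ Y k, H.arrows u v = ∅)
    {a b : Obj} {h : a ⟶ b} (hh : h ∈ H.arrows a b) {k : ι} (ha : a ∈ Y k) : b ∈ Y k := by
  obtain ⟨j, hb⟩ := hcover b
  obtain rfl : k = j := by
    by_contra hkj
    simp [hdisj k j hkj a ha b hb] at hh
  exact hb

/-- **Lemma 4.2.**  Standing hypotheses, with `1_g ≠ 0` for all `g ∈ 𝒢`.  Let
`ℋ ∈ wSub_gt(𝒢)` with decomposition into connected components `ℋ_j` on `Y_j`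
(`𝒢₀ = Y₁ ∪̇ … ∪̇ Y_r`), chosen `y_j ∈ Y_j` and transversals
`τ_j = (τ_{j,z})_{z ∈ Y_j}` in `ℋ_j` for `y_j` satisfying the group-type condition.
Let `T = S^{α_ℋ}` and `T_{y_j} = S_{y_j}^{α_{ℋ_j(y_j)}}`.  Then for `g ∈ 𝒢`:
`g ∈ 𝒢_T` if and only if there is `1 ≤ k ≤ r` with `s(g), t(g) ∈ Y_k` and
`τ_k(g) = τ_{k,t(g)}⁻¹ g τ_{k,s(g)} ∈ 𝒢(y_k)_{T_{y_k}}`. -/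
theorem mem_fixing_iff_component
    {Obj : Type*} [Groupoid Obj] [Fintype Obj] [∀ a b : Obj, Finite (a ⟶ b)]
    {S : Type*} [CommRing S] (α : UPA Obj S)
    (hsum : ∑ y : Obj, α.e (𝟙 y) = 1)
    (horth : ∀ y z : Obj, y ≠ z → α.e (𝟙 y) * α.e (𝟙 z) = 0)
    (hconn : ∀ a b : Obj, Nonempty (a ⟶ b))
    (x : Obj) (τ : ∀ y : Obj, x ⟶ y) (hτx : τ x = 𝟙 x)
    (hgt : ∀ y : Obj, α.e (Groupoid.inv (τ y)) = α.e (𝟙 x) ∧ α.e (τ y) = α.e (𝟙 y))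
    (hne : ∀ ⦃a b : Obj⦄ (g : a ⟶ b), α.e g ≠ 0)
    (H : Subgroupoid Obj) (hwide : H.IsWide)
    (r : ℕ) (Y : Fin r → Set Obj)
    (hYcover : ∀ u : Obj, ∃ j, u ∈ Y j)
    (hYconn : ∀ j, ∀ u ∈ Y j, ∀ v ∈ Y j, (H.arrows u v).Nonempty)
    (hYdisj : ∀ j k, j ≠ k → ∀ u ∈ Y j, ∀ v ∈ Y k, H.arrows u v = ∅)
    (y : Fin r → Obj) (hy : ∀ j, y j ∈ Y j)
    (τj : ∀ (j : Fin r) (z : Obj), z ∈ Y j → ((y j) ⟶ z))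
    (hτjH : ∀ j z hz, τj j z hz ∈ H.arrows (y j) z)
    (hτjid : ∀ j, τj j (y j) (hy j) = 𝟙 (y j))
    (hτjgt : ∀ j z hz, α.e (Groupoid.inv (τj j z hz)) = α.e (𝟙 (y j)) ∧
        α.e (τj j z hz) = α.e (𝟙 z)) :
    ∀ ⦃u v : Obj⦄ (g : u ⟶ v),
      g ∈ α.fixingSet (α.invSet H) u v ↔
        ∃ (k : Fin r) (hu : u ∈ Y k) (hv : v ∈ Y k),
          (τj k u hu ≫ g ≫ Groupoid.inv (τj k v hv)) ∈
            α.fixingSet (α.grpInvSet (y k) (H.arrows (y k) (y k))) (y k) (y k) := by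
  intro u v g
  have hclosed : ∀ k ⦃a b : Obj⦄ (h : a ⟶ b), h ∈ H.arrows a b → (a ∈ Y k ↔ b ∈ Y k) :=
    fun k _ _ _ hh => ⟨H.mem_of_mem_arrows_of_pairwise_empty hYcover hYdisj hh,
      H.mem_of_mem_arrows_of_pairwise_empty hYcover hYdisj (H.inv hh)⟩
  have hconj := fun k (hu : u ∈ Y k) (hv : v ∈ Y k) =>
    α.mem_fixingSet_iff_conj (τj k) horth (hclosed k) (hτjH k) (hτjgt k) hu hv g
  constructor
  · intro hg
    obtain ⟨k, hu⟩ := hYcover u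
    have hv := α.mem_of_mem_fixingSet (τj k) horth (hclosed k) (hτjH k) (hτjgt k) hg (hne g) hu
    exact ⟨k, hu, hv, (hconj k hu hv).1 hg⟩
  · rintro ⟨k, hu, hv, hl⟩
    exact (hconj k hu hv).2 hl

end PaperGalois
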